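/- arXiv:2101.00670 — 5 statements merged into one kernel-verified Lean document; each statement's English description precedes it below -/
import Mathlib

section
/- The partial order on partial isometries of B(H), defined by e ≤ u iff u - e is a partial isometry with (u-e)* e = 0 and (u-e) e* = 0, is transitive: if e ≤ u and u ≤ w then e ≤ w. -/
/-- A partial isometry in `B(H)`. -/
def IsPIso {H : Type*} [NormedAddCommGroup H] [InnerProductSpace ℂ H] [CompleteSpace H]
    (e : H →L[ℂ] H) : Prop :=
  e * ContinuousLinearMap.adjoint e * e = e

/-- The natural partial order on partial isometries: `e ≤ u` iff `u - e` is a partial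
isometry orthogonal to `e`. -/
def PIsoLE {H : Type*} [NormedAddCommGroup H] [InnerProductSpace ℂ H] [CompleteSpace H]
    (e u : H →L[ℂ] H) : Prop :=
  IsPIso (u - e) ∧ ContinuousLinearMap.adjoint (u - e) * e = 0 ∧
    (u - e) * ContinuousLinearMap.adjoint e = 0

lemma piso_aux {R : Type*} [Ring R] [StarRing R] (e a b : R)
    (hE : e * star e * e = e)
    (ha : a * star a * a = a) (hae : star a * e = 0) (hea : a * star e = 0)
    (hb : b * star b * b = b) (hbu : star b * (a + e) = 0) (hub : b * (star a + star e) = 0) :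
    (b + a) * star (b + a) * (b + a) = b + a ∧ star (b + a) * e = 0 ∧
      (b + a) * star e = 0 := by
  have h0 : star b * a + star b * e = 0 := by rw [← mul_add]; exact hbu
  have h0' : b * star a + b * star e = 0 := by rw [← mul_add]; exact hub
  have h1 : star b * e = -(star b * a) := by
    have := eq_neg_of_add_eq_zero_right h0
    exact this
  have h1' : b * star e = -(b * star a) := by
    have := eq_neg_of_add_eq_zero_right h0'
    exact this
  have hbe : star b * e = 0 := by
    calc star b * e = star b * (e * star e * e) := by rw [hE]
      _ = (-(star b * a)) * (star e * e) := by rw [← h1]; noncomm_ring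
      _ = -(star b * (a * star e * e)) := by noncomm_ring
      _ = 0 := by rw [hea]; simp
  have heb : b * star e = 0 := by
    calc b * star e = b * star (e * star e * e) := by rw [hE]
      _ = (-(b * star a)) * (e * star e) := by
          rw [← h1']; simp only [star_mul, star_star]; noncomm_ring
      _ = -(b * (star a * e * star e)) := by noncomm_ring
      _ = 0 := by rw [hae]; simp
  have hba : star b * a = 0 := by
    have := h0; rw [hbe, add_zero] at this; exact this
  have hba' : b * star a = 0 := by
    have := h0'; rw [heb, add_zero] at this; exact this
  have hab : star a * b = 0 := by
    have := congrArg star hba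
    simpa [star_mul] using this
  have hab' : a * star b = 0 := by
    have := congrArg star hba'
    simpa [star_mul] using this
  refine ⟨?_, ?_, ?_⟩
  · have key : (b + a) * star (b + a) * (b + a)
        = b * star b * b + a * star a * a +
          (b * (star b * a) + (b * star a) * b + (b * star a) * a +
            (a * star b) * b + (a * star b) * a + a * (star a * b)) := by
      simp only [star_add]; noncomm_ring
    rw [key, hba, hba', hab', hab, hb, ha]
    simp
  · rw [star_add, add_mul, hbe, hae]; simp
  · rw [add_mul, heb, hea]; simp

/-- The partial order on partial isometries is transitive. -/
theorem stmt_5 {H : Type*} [NormedAddCommGroup H] [InnerProductSpace ℂ H] [CompleteSpace H]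
    (e u w : H →L[ℂ] H) (he : IsPIso e) (hu : IsPIso u) (hw : IsPIso w)
    (h1 : PIsoLE e u) (h2 : PIsoLE u w) : PIsoLE e w := by
  obtain ⟨ha, hae, hea⟩ := h1
  obtain ⟨hb, hbu, hub⟩ := h2
  simp only [IsPIso, PIsoLE, ← ContinuousLinearMap.star_eq_adjoint] at *
  have hwe : w - e = (w - u) + (u - e) := by abel
  have hbu' : star (w - u) * ((u - e) + e) = 0 := by
    simpa using hbu
  have hub' : (w - u) * (star (u - e) + star e) = 0 := by
    rw [← star_add]; simpa using hub
  obtain ⟨g1, g2, g3⟩ := piso_aux e (u - e) (w - u) he ha hae hea hb hbu' hub'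
  rw [hwe]
  exact ⟨g1, g2, g3⟩
end

section
/- Let 𝒰 and 𝒱 be partially ordered sets of partial isometries in B(H) and B(K) respectively (the set of all partial isometries with the order e ≤ u iff u - e is a partial isometry with (u-e)*e = 0 = (u-e)e*, and orthogonality e ⊥ v iff e*v = 0 = e v*). Suppose Φ : 𝒰 → 𝒱 is a bijection such that e ≤ u iff Φ(e) ≤ Φ(u), and such that e ⊥ u implies Φ(e) ⊥ Φ(u). Then also Φ(e) ⊥ Φ(u) implies e ⊥ u; that is, Φ preserves orthogonality in both directions. -/
set_option linter.unusedSectionVars false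

namespace Stmt7Aux

variable {A : Type*} [NonUnitalNormedRing A] [StarRing A] [CStarRing A]

/-- Abstract partial isometry. -/
def PI (x : A) : Prop := x * star x * x = x

/-- Abstract order on partial isometries. -/
def LE' (e u : A) : Prop := PI (u - e) ∧ star (u - e) * e = 0 ∧ (u - e) * star e = 0

/-- Abstract orthogonality. -/
def Perp (e u : A) : Prop := star e * u = 0 ∧ e * star u = 0

theorem perp_symm {e u : A} (h : Perp e u) : Perp u e := by
  obtain ⟨h1, h2⟩ := h
  refine ⟨?_, ?_⟩
  · have := congrArg star h1
    simpa [star_mul] using this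
  · have := congrArg star h2
    simpa [star_mul] using this

theorem expand {e t : A} (h : Perp e t) :
    (e + t) * star (e + t) * (e + t) = e * star e * e + t * star t * t := by
  obtain ⟨h1, h2⟩ := h
  have h3 : star t * e = 0 := by simpa [star_mul] using congrArg star h1
  have h4 : t * star e = 0 := by simpa [star_mul] using congrArg star h2
  simp [star_add, mul_add, add_mul, mul_assoc, h1, h2, h3, h4]

theorem sum_pi {e t : A} (he : PI e) (ht : PI t) (h : Perp e t) : PI (e + t) := by
  unfold PI at *
  rw [expand h, he, ht]

theorem pi_of_sum {e t : A} (he : PI e) (h : Perp e t) (hs : PI (e + t)) : PI t := by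
  unfold PI at *
  rw [expand h, he] at hs
  exact add_left_cancel hs

theorem le_add_self {e u : A} (hu : PI u) (h : Perp e u) : LE' e (e + u) := by
  obtain ⟨h1, h2⟩ := h
  have h3 : star u * e = 0 := by simpa [star_mul] using congrArg star h1
  have h4 : u * star e = 0 := by simpa [star_mul] using congrArg star h2
  refine ⟨?_, ?_, ?_⟩ <;> rw [add_sub_cancel_left]
  · exact hu
  · exact h3
  · exact h4

theorem le_add_self' {e u : A} (he : PI e) (h : Perp e u) : LE' u (e + u) := by
  obtain ⟨h1, h2⟩ := h
  refine ⟨?_, ?_, ?_⟩ <;> rw [add_sub_cancel_right]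
  · exact he
  · exact h1
  · exact h2

theorem le_compl {x y : A} (hx : PI x) (h : LE' x y) : LE' (y - x) y := by
  obtain ⟨hp, h1, h2⟩ := h
  refine ⟨?_, ?_, ?_⟩ <;> rw [sub_sub_cancel]
  · exact hx
  · have := congrArg star h1
    simpa [star_mul] using this
  · have := congrArg star h2
    simpa [star_mul] using this

theorem perp_compl {x y : A} (h : LE' x y) : Perp (y - x) x := ⟨h.2.1, h.2.2⟩

theorem le_in_sum {e u x : A} (he : PI e) (heu : Perp e u) (hxe : Perp x e)
    (hle : LE' x (e + u)) : LE' x u := by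
  obtain ⟨heu1, heu2⟩ := heu
  obtain ⟨hxe1, hxe2⟩ := hxe
  obtain ⟨hs, h1, h2⟩ := hle
  have hex1 : star e * x = 0 := by simpa [star_mul] using congrArg star hxe1
  have hex2 : e * star x = 0 := by simpa [star_mul] using congrArg star hxe2
  have h1' : star (e + (u - x)) * x = 0 := by rwa [add_sub_assoc] at h1
  rw [star_add, add_mul, hex1, zero_add] at h1'
  have h2' : (e + (u - x)) * star x = 0 := by rwa [add_sub_assoc] at h2
  rw [add_mul, hex2, zero_add] at h2'
  have hperp : Perp e (u - x) := by
    constructor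
    · rw [mul_sub, heu1, hex1, sub_zero]
    · rw [star_sub, mul_sub, heu2, hex2, sub_zero]
  have hsum : PI (e + (u - x)) := by rwa [← add_sub_assoc]
  exact ⟨pi_of_sum he hperp hsum, h1', h2'⟩

theorem eq_zero_of_le_perp {x v v' : A} (h : LE' x v) (h' : LE' x v')
    (hp : Perp v v') : x = 0 := by
  obtain ⟨-, h1, -⟩ := h
  obtain ⟨-, h1', -⟩ := h'
  rw [star_sub, sub_mul, sub_eq_zero] at h1 h1'
  -- h1 : star v * x = star x * x, h1' : star v' * x = star x * x
  have hA : star x * v = star x * x := by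
    have := congrArg star h1
    simpa [star_mul] using this
  have hsq : (star x * x) * (star x * x) = 0 := by
    nth_rewrite 1 [← hA]
    rw [← h1', mul_assoc, ← mul_assoc v, hp.2, zero_mul, mul_zero]
  have hxx : star x * x = 0 := by
    have : star (star x * x) * (star x * x) = 0 := by
      rwa [star_mul, star_star]
    exact (CStarRing.star_mul_self_eq_zero_iff _).mp this
  exact (CStarRing.star_mul_self_eq_zero_iff _).mp hxx

theorem zero_le {z : A} (hz : PI z) : LE' 0 z :=
  ⟨by simpa using hz, by simp, by simp⟩

end Stmt7Aux

/-- Orthogonality of partial isometries. -/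
def PIsoPerp {H : Type*} [NormedAddCommGroup H] [InnerProductSpace ℂ H] [CompleteSpace H]
    (e u : H →L[ℂ] H) : Prop :=
  ContinuousLinearMap.adjoint e * u = 0 ∧ e * ContinuousLinearMap.adjoint u = 0

section Bridge

open Stmt7Aux

variable {H : Type*} [NormedAddCommGroup H] [InnerProductSpace ℂ H] [CompleteSpace H]

theorem isPIso_iff (e : H →L[ℂ] H) : IsPIso e ↔ PI e := by
  rw [IsPIso, PI, ContinuousLinearMap.star_eq_adjoint]

theorem pisoLE_iff (e u : H →L[ℂ] H) : PIsoLE e u ↔ LE' e u := by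
  rw [PIsoLE, LE', isPIso_iff, ContinuousLinearMap.star_eq_adjoint,
    ContinuousLinearMap.star_eq_adjoint]

theorem pisoPerp_iff (e u : H →L[ℂ] H) : PIsoPerp e u ↔ Perp e u := by
  rw [PIsoPerp, Perp, ContinuousLinearMap.star_eq_adjoint,
    ContinuousLinearMap.star_eq_adjoint]

end Bridge

/-- A bijection between the sets of partial isometries of `B(H)` and `B(K)` preserving
the partial order in both directions and orthogonality in one direction preserves
orthogonality in both directions. -/
theorem stmt_7 {H K : Type*}
    [NormedAddCommGroup H] [InnerProductSpace ℂ H] [CompleteSpace H]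
    [NormedAddCommGroup K] [InnerProductSpace ℂ K] [CompleteSpace K]
    (Φ : (H →L[ℂ] H) → (K →L[ℂ] K))
    (hbij : Set.BijOn Φ {e | IsPIso e} {v | IsPIso v})
    (horder : ∀ e u, IsPIso e → IsPIso u → (PIsoLE e u ↔ PIsoLE (Φ e) (Φ u)))
    (hperp : ∀ e u, IsPIso e → IsPIso u → PIsoPerp e u → PIsoPerp (Φ e) (Φ u)) :
    ∀ e u, IsPIso e → IsPIso u → PIsoPerp (Φ e) (Φ u) → PIsoPerp e u := by
  open Stmt7Aux in
  intro e u he hu hK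
  have hPe : PI e := (isPIso_iff e).mp he
  have hPu : PI u := (isPIso_iff u).mp hu
  have hPI' : ∀ a : H →L[ℂ] H, PI a → PI (Φ a) := fun a ha =>
    (isPIso_iff _).mp (hbij.mapsTo ((isPIso_iff _).mpr ha))
  have horder' : ∀ a b : H →L[ℂ] H, PI a → PI b → (LE' a b ↔ LE' (Φ a) (Φ b)) := by
    intro a b ha hb
    rw [← pisoLE_iff, ← pisoLE_iff]
    exact horder a b ((isPIso_iff _).mpr ha) ((isPIso_iff _).mpr hb)
  have hperp' : ∀ a b : H →L[ℂ] H, PI a → PI b → Perp a b → Perp (Φ a) (Φ b) := by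
    intro a b ha hb hab
    rw [← pisoPerp_iff]
    exact hperp a b ((isPIso_iff _).mpr ha) ((isPIso_iff _).mpr hb)
      ((pisoPerp_iff _ _).mpr hab)
  have hKp : Perp (Φ e) (Φ u) := (pisoPerp_iff _ _).mp hK
  have hPΦe : PI (Φ e) := hPI' e hPe
  have hPΦu : PI (Φ u) := hPI' u hPu
  have hPv : PI (Φ e + Φ u) := sum_pi hPΦe hPΦu hKp
  obtain ⟨w, hwPI, hw⟩ := hbij.surjOn (show (Φ e + Φ u) ∈ {v | IsPIso v} from
    (isPIso_iff _).mpr hPv)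
  have hPw : PI w := (isPIso_iff w).mp hwPI
  -- e ≤ w and u ≤ w
  have he_le_w : LE' e w := by
    refine (horder' e w hPe hPw).mpr ?_
    rw [hw]; exact le_add_self hPΦu hKp
  have hu_le_w : LE' u w := by
    refine (horder' u w hPu hPw).mpr ?_
    rw [hw]; exact le_add_self' hPΦe hKp
  -- a := w - e satisfies a ≤ u
  have hPa : PI (w - e) := he_le_w.1
  have ha_le_u : LE' (w - e) u := by
    refine (horder' (w - e) u hPa hPu).mpr ?_
    refine le_in_sum hPΦe hKp (hperp' _ _ hPa hPe (perp_compl he_le_w)) ?_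
    rw [← hw]
    exact (horder' (w - e) w hPa hPw).mp (le_compl hPe he_le_w)
  -- b := w - u satisfies b ≤ e
  have hPb : PI (w - u) := hu_le_w.1
  have hb_le_e : LE' (w - u) e := by
    refine (horder' (w - u) e hPb hPe).mpr ?_
    refine le_in_sum hPΦu (perp_symm hKp) (hperp' _ _ hPb hPu (perp_compl hu_le_w)) ?_
    rw [add_comm, ← hw]
    exact (horder' (w - u) w hPb hPw).mp (le_compl hPu hu_le_w)
  -- d := u - (w - e)
  have hPd : PI (u - (w - e)) := ha_le_u.1
  have hd_le_u : LE' (u - (w - e)) u := le_compl hPa ha_le_u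
  have hd_le_e : LE' (u - (w - e)) e := by
    have h := le_compl hPb hb_le_e
    have heq : e - (w - u) = u - (w - e) := by abel
    rwa [heq] at h
  -- Φ d = 0
  have hΦd0 : Φ (u - (w - e)) = 0 :=
    eq_zero_of_le_perp ((horder' _ e hPd hPe).mp hd_le_e)
      ((horder' _ u hPd hPu).mp hd_le_u) hKp
  -- Φ 0 = 0
  have hP0 : PI (0 : H →L[ℂ] H) := by simp [PI]
  have hΦ00 : Φ (0 : H →L[ℂ] H) = 0 := by
    have h := (horder' 0 _ hP0 hPd).mp (zero_le hPd)
    rw [hΦd0] at h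
    have h1 := h.2.1
    rw [zero_sub, star_neg, neg_mul, neg_eq_zero] at h1
    exact (CStarRing.star_mul_self_eq_zero_iff _).mp h1
  -- d = 0, hence u = w - e
  have hd0 : u - (w - e) = 0 := by
    refine hbij.injOn ((isPIso_iff _).mpr hPd) ((isPIso_iff _).mpr hP0) ?_
    rw [hΦd0, hΦ00]
  have hue : u = w - e := sub_eq_zero.mp hd0
  have hfinal : Perp u e := by
    rw [hue]
    exact perp_compl he_le_w
  exact (pisoPerp_iff e u).mpr (perp_symm hfinal)
end

section
/- There do not exist nonempty sets A, B of nonzero partial isometries in B(H) (dim H ≥ 1) such that A ∪ B equals the set of all nonzero partial isometries, and every element of A is orthogonal to every element of B (a*b = 0 and a b* = 0 for all a ∈ A, b ∈ B). -/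
private lemma adj_one {H : Type*} [NormedAddCommGroup H] [InnerProductSpace ℂ H]
    [CompleteSpace H] : ContinuousLinearMap.adjoint (1 : H →L[ℂ] H) = 1 :=
  ContinuousLinearMap.adjoint_id

/-- `B(H)` is a factor: the nonzero partial isometries cannot be split into two nonempty
mutually orthogonal families covering all of them. -/
theorem stmt_9 {H : Type*} [NormedAddCommGroup H] [InnerProductSpace ℂ H] [CompleteSpace H]
    [Nontrivial H] :
    ¬ ∃ A B : Set (H →L[ℂ] H), A.Nonempty ∧ B.Nonempty ∧
      A ∪ B = {e | IsPIso e ∧ e ≠ 0} ∧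
      (∀ a ∈ A, ∀ b ∈ B, PIsoPerp a b) := by
  rintro ⟨A, B, ⟨a, ha⟩, ⟨b, hb⟩, hAB, hperp⟩
  have hone : (1 : H →L[ℂ] H) ∈ A ∪ B := by
    rw [hAB]
    refine ⟨?_, one_ne_zero⟩
    simp [IsPIso, adj_one]
  -- a and b are nonzero
  have haz : a ≠ 0 := by
    have : a ∈ A ∪ B := Or.inl ha
    rw [hAB] at this; exact this.2
  have hbz : b ≠ 0 := by
    have : b ∈ A ∪ B := Or.inr hb
    rw [hAB] at this; exact this.2
  rcases hone with h1 | h1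
  · have := (hperp 1 h1 b hb).1
    rw [adj_one, one_mul] at this
    exact hbz this
  · have := (hperp a ha 1 h1).2
    rw [adj_one, mul_one] at this
    exact haz this
end

section
/- In a complex spin factor M, let u = λa be a tripotent with λ ∈ 𝕋 and a ∈ M_ℝ, ‖a‖ = 1. Suppose v = (x + iy)/2 is a tripotent with x, y ∈ M_ℝ, ‖x‖ = ‖y‖ = 1, ⟨x,y⟩ = 0. If v ≤ u in the tripotent order (that is, u − v is a tripotent orthogonal to v), then there exists b ∈ M_ℝ with ‖b‖ = 1 and ⟨a,b⟩ = 0 such that v = λ(a + ib)/2. -/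
/-- The spin factor triple product `{x,y,z} = ⟨x,y⟩z + ⟨z,y⟩x − ⟨x,z̄⟩ȳ` on a complex
Hilbert space `M` with conjugation `c`.  Here the paper's inner product `⟨x,y⟩`, linear in
the first variable, equals Mathlib's `⟪y, x⟫`. -/
noncomputable def spinTriple {M : Type*} [NormedAddCommGroup M] [InnerProductSpace ℂ M]
    (c : M → M) (x y z : M) : M :=
  (inner ℂ y x : ℂ) • z + (inner ℂ y z : ℂ) • x - (inner ℂ (c z) x : ℂ) • c y

/-- If the minimal tripotent `v = (x+iy)/2` satisfies `v ≤ u` for the maximal tripotent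
`u = λa` (`λ ∈ 𝕋`, `a` a real unit vector), then `v = λ(a+ib)/2` for some real unit
vector `b` orthogonal to `a`. -/
theorem stmt_13 {M : Type*} [NormedAddCommGroup M] [InnerProductSpace ℂ M] (c : M → M)
    (hadd : ∀ x y, c (x + y) = c x + c y)
    (hsmul : ∀ (t : ℂ) (x : M), c (t • x) = (starRingEnd ℂ t) • c x)
    (hinv : ∀ x, c (c x) = x)
    (hinner : ∀ x y, (inner ℂ (c x) (c y) : ℂ) = starRingEnd ℂ (inner ℂ x y))
    (l : ℂ) (hl : ‖l‖ = 1) (a : M) (hca : c a = a) (hna : ‖a‖ = 1)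
    (x y : M) (hcx : c x = x) (hcy : c y = y) (hnx : ‖x‖ = 1) (hny : ‖y‖ = 1)
    (hxy : (inner ℂ x y : ℂ) = 0)
    -- `v ≤ u`: `u − v` is a tripotent orthogonal to `v`
    (hle1 : spinTriple c (l • a - (2 : ℂ)⁻¹ • (x + Complex.I • y))
        (l • a - (2 : ℂ)⁻¹ • (x + Complex.I • y))
        (l • a - (2 : ℂ)⁻¹ • (x + Complex.I • y))
      = l • a - (2 : ℂ)⁻¹ • (x + Complex.I • y))
    (hle2 : spinTriple c (l • a - (2 : ℂ)⁻¹ • (x + Complex.I • y))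
        (l • a - (2 : ℂ)⁻¹ • (x + Complex.I • y))
        ((2 : ℂ)⁻¹ • (x + Complex.I • y)) = 0) :
    ∃ b : M, c b = b ∧ ‖b‖ = 1 ∧ (inner ℂ a b : ℂ) = 0 ∧
      (2 : ℂ)⁻¹ • (x + Complex.I • y) = l • ((2 : ℂ)⁻¹ • (a + Complex.I • b)) := by
  have hll' : l * (starRingEnd ℂ) l = 1 := by
    rw [Complex.mul_conj]; norm_cast
    rw [Complex.normSq_eq_norm_sq, hl]; norm_num
  have isq : (Complex.I : ℂ) ^ 2 = -1 := Complex.I_sq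
  have ixx : (inner ℂ x x : ℂ) = 1 := by rw [inner_self_eq_norm_sq_to_K, hnx]; norm_num
  have iyy : (inner ℂ y y : ℂ) = 1 := by rw [inner_self_eq_norm_sq_to_K, hny]; norm_num
  have iaa : (inner ℂ a a : ℂ) = 1 := by rw [inner_self_eq_norm_sq_to_K, hna]; norm_num
  have iyx : (inner ℂ y x : ℂ) = 0 := by rw [← inner_conj_symm, hxy, map_zero]
  have hS' : (starRingEnd ℂ) (inner ℂ x a : ℂ) = inner ℂ x a := by
    rw [← hinner, hcx, hca]
  have hT' : (starRingEnd ℂ) (inner ℂ y a : ℂ) = inner ℂ y a := by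
    rw [← hinner, hcy, hca]
  have hax : (inner ℂ a x : ℂ) = inner ℂ x a := by rw [← inner_conj_symm, hS']
  have hay : (inner ℂ a y : ℂ) = inner ℂ y a := by rw [← inner_conj_symm, hT']
  set S : ℂ := (inner ℂ x a : ℂ) with hSdef
  set T : ℂ := (inner ℂ y a : ℂ) with hTdef
  have hneg : ∀ v : M, c (-v) = - c v := by
    intro v
    have := hsmul (-1) v
    simpa using this
  have hsub : ∀ u v : M, c (u - v) = c u - c v := by
    intro u v
    rw [sub_eq_add_neg, hadd, hneg, sub_eq_add_neg]
  have hcV : c ((2:ℂ)⁻¹ • (x + Complex.I • y)) = (2:ℂ)⁻¹ • (x + (-Complex.I) • y) := by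
    rw [hsmul, hadd, hsmul, hcx, hcy]
    norm_num [map_inv₀, Complex.conj_ofNat, Complex.conj_I]
  have hcW : c (l • a - (2:ℂ)⁻¹ • (x + Complex.I • y))
      = (starRingEnd ℂ l) • a - (2:ℂ)⁻¹ • (x + (-Complex.I) • y) := by
    rw [hsub, hsmul, hca, hcV]
  rw [spinTriple, hcV, hcW] at hle2
  have EX := congrArg (fun m => (inner ℂ x m : ℂ)) hle2
  have EY := congrArg (fun m => (inner ℂ y m : ℂ)) hle2
  have EA := congrArg (fun m => (inner ℂ a m : ℂ)) hle2
  simp only [inner_add_right, inner_sub_right, inner_smul_right, inner_add_left,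
    inner_sub_left, inner_smul_left, inner_zero_right, ixx, iyy, iaa, hxy, iyx, hax, hay,
    ← hSdef, ← hTdef, Complex.conj_I, map_inv₀, Complex.conj_conj, map_neg, map_ofNat,
    hS', hT'] at EX EY EA
  -- the two key scalar identities
  have E1 : l * (S - Complex.I * T) + (starRingEnd ℂ l) * (S + Complex.I * T) = 2 := by
    linear_combination (-1 : ℂ) * EX + Complex.I * EY + hll' +
      ((-7/8 : ℂ) + (1/8 : ℂ)*Complex.I^2 + (1/4 : ℂ)*(starRingEnd ℂ l)*T*Complex.I +
        (3/4 : ℂ)*(starRingEnd ℂ l)*S + (-1/4 : ℂ)*l*T*Complex.I + (3/4 : ℂ)*l*S +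
        (-1/2 : ℂ)*l*(starRingEnd ℂ l)) * isq
  have E2 : S ^ 2 + T ^ 2 = 1 := by
    linear_combination (2 * (starRingEnd ℂ l)) * EA - (2 * (starRingEnd ℂ l) * S) * EX -
      (2 * (starRingEnd ℂ l) * T) * EY + (1 - S^2 - T^2) * hll' +
      ((-1/2 : ℂ)*(starRingEnd ℂ l)^2 + (1/2 : ℂ)*(starRingEnd ℂ l)^2*T^2 +
        (1/2 : ℂ)*(starRingEnd ℂ l)^2*S^2 + (-1/2 : ℂ)*l*(starRingEnd ℂ l) +
        (1/2 : ℂ)*l*(starRingEnd ℂ l)*T^2 + (1/2 : ℂ)*l*(starRingEnd ℂ l)*S^2) * isq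
  have h0 : (l * (S - Complex.I * T) - 1) * ((starRingEnd ℂ l) * (S + Complex.I * T) - 1) = 0 := by
    linear_combination ((S + Complex.I*T) * (S - Complex.I*T)) * hll' + E2 - E1 +
      (-(T^2)) * isq
  have hconj : (starRingEnd ℂ) (l * (S - Complex.I * T) - 1)
      = (starRingEnd ℂ l) * (S + Complex.I * T) - 1 := by
    rw [map_sub, map_mul, map_sub, map_mul, map_one, Complex.conj_I, hS', hT']
    ring
  rw [← hconj, Complex.mul_conj] at h0
  have hz : l * (S - Complex.I * T) - 1 = 0 := by
    rw [← Complex.normSq_eq_zero]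
    exact_mod_cast h0
  have hσ : l * (S - Complex.I * T) = 1 := by linear_combination hz
  -- a = S x + T y
  have h4 : (inner ℂ (a - S • x - T • y) (a - S • x - T • y) : ℂ) = 0 := by
    simp only [inner_sub_left, inner_sub_right, inner_smul_left, inner_smul_right,
      ixx, iyy, iaa, hxy, iyx, hax, hay, ← hSdef, ← hTdef, hS', hT']
    linear_combination (-1 : ℂ) * E2
  rw [inner_self_eq_zero] at h4
  have ha : a = S • x + T • y := by
    rw [sub_sub, sub_eq_zero] at h4
    exact h4
  refine ⟨S • y - T • x, ?_, ?_, ?_, ?_⟩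
  · rw [hsub, hsmul, hsmul, hcx, hcy, hS', hT']
  · have hbb : (inner ℂ (S • y - T • x) (S • y - T • x) : ℂ) = 1 := by
      simp only [inner_sub_left, inner_sub_right, inner_smul_left, inner_smul_right,
        ixx, iyy, hxy, iyx, hS', hT']
      linear_combination E2
    have h5 := inner_self_eq_norm_sq (𝕜 := ℂ) (x := S • y - T • x)
    rw [hbb] at h5
    have h6 : ‖S • y - T • x‖ ^ 2 = 1 := by simpa using h5.symm
    nlinarith [norm_nonneg (S • y - T • x)]
  · simp only [inner_sub_right, inner_smul_right, hax, hay]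
    ring
  · rw [ha]
    match_scalars
    · linear_combination (-(2:ℂ)⁻¹) * hσ
    · linear_combination (-(Complex.I)/2) * hσ + (-(l*T)/2) * isq
end

section
/- Let M be a complex spin factor with conjugation x ↦ x̄ and triple product {x,y,z} = ⟨x,y⟩z + ⟨z,y⟩x − ⟨x,z̄⟩ȳ. Let U : M_ℝ → M_ℝ be a surjective real-linear isometry of the real Hilbert space M_ℝ, let λ ∈ ℂ with |λ| = 1, and define T : M → M by T(a + ib) = λ(U(a) + iU(b)) for a, b ∈ M_ℝ. Then T is a complex-linear bijection satisfying T{x,y,z} = {T(x), T(y), T(z)} for all x, y, z ∈ M. -/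
open ComplexConjugate

namespace SpinFactor

section Module

variable {M : Type*} [AddCommGroup M] [Module ℂ M]

theorem smul_add_I_smul (t : ℂ) (u v : M) :
    t • (u + Complex.I • v) = (t.re • u - t.im • v) + Complex.I • (t.im • u + t.re • v) := by
  match_scalars <;> simp [Complex.ext_iff]

theorem map_real_smul (c : M →ₗ⋆[ℂ] M) (r : ℝ) (x : M) : c (r • x) = r • c x := by
  rw [← Complex.coe_smul, map_smulₛₗ, Complex.conj_ofReal, Complex.coe_smul]

theorem exists_eq_add_I_smul {c : M →ₗ⋆[ℂ] M} (hc : Function.Involutive c) (x : M) :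
    ∃ a b, c a = a ∧ c b = b ∧ x = a + Complex.I • b := by
  refine ⟨(2⁻¹ : ℂ) • (x + c x), (2⁻¹ * Complex.I) • (c x - x), ?_, ?_, ?_⟩
  · rw [map_smulₛₗ, map_add, hc x, add_comm, map_inv₀, map_ofNat]
  · rw [map_smulₛₗ, map_sub, hc x, map_mul, map_inv₀, map_ofNat, Complex.conj_I, ← neg_sub x,
      smul_neg, ← neg_smul, mul_neg]
  · rw [smul_smul, mul_left_comm, Complex.I_mul_I]
    module

def IsScaledComplexification (c : M →ₗ⋆[ℂ] M) (U : M →ₗ[ℝ] M) (l : ℂ) (T : M → M) : Prop :=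
  ∀ a b, c a = a → c b = b → T (a + Complex.I • b) = l • (U a + Complex.I • U b)

namespace IsScaledComplexification

variable {c : M →ₗ⋆[ℂ] M} {U : M →ₗ[ℝ] M} {l : ℂ} {T : M → M}

theorem map_add (hT : IsScaledComplexification c U l T) (hc : Function.Involutive c) (x y : M) :
    T (x + y) = T x + T y := by
  obtain ⟨a, b, ha, hb, rfl⟩ := exists_eq_add_I_smul hc x
  obtain ⟨a', b', ha', hb', rfl⟩ := exists_eq_add_I_smul hc y
  have hsum : a + Complex.I • b + (a' + Complex.I • b') = (a + a') + Complex.I • (b + b') := by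
    module
  have hsum_a : c (a + a') = a + a' := by rw [c.map_add, ha, ha']
  have hsum_b : c (b + b') = b + b' := by rw [c.map_add, hb, hb']
  rw [hsum, hT _ _ hsum_a hsum_b, hT a b ha hb, hT a' b' ha' hb', U.map_add, U.map_add]
  module

theorem map_smul (hT : IsScaledComplexification c U l T) (hc : Function.Involutive c)
    (t : ℂ) (x : M) : T (t • x) = t • T x := by
  obtain ⟨a, b, ha, hb, rfl⟩ := exists_eq_add_I_smul hc x
  have hre : c (t.re • a - t.im • b) = t.re • a - t.im • b := by
    rw [c.map_sub, map_real_smul, map_real_smul, ha, hb]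
  have him : c (t.im • a + t.re • b) = t.im • a + t.re • b := by
    rw [c.map_add, map_real_smul, map_real_smul, ha, hb]
  rw [smul_add_I_smul, hT _ _ hre him, hT a b ha hb, U.map_sub, U.map_add, U.map_smul, U.map_smul,
    U.map_smul, U.map_smul, ← smul_add_I_smul, smul_comm]

def toLinearMap (hT : IsScaledComplexification c U l T) (hc : Function.Involutive c) :
    M →ₗ[ℂ] M where
  toFun := T
  map_add' := hT.map_add hc
  map_smul' := hT.map_smul hc

theorem surjective (hT : IsScaledComplexification c U l T) (hc : Function.Involutive c)
    (hl : l ≠ 0) (hU : ∀ y, c y = y → ∃ x, c x = x ∧ U x = y) : Function.Surjective T := by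
  intro y
  obtain ⟨a, b, ha, hb, hy⟩ := exists_eq_add_I_smul hc (l⁻¹ • y)
  obtain ⟨a₀, ha₀, rfl⟩ := hU a ha
  obtain ⟨b₀, hb₀, rfl⟩ := hU b hb
  refine ⟨a₀ + Complex.I • b₀, ?_⟩
  rw [hT a₀ b₀ ha₀ hb₀, ← hy, smul_smul, mul_inv_cancel₀ hl, one_smul]

theorem map_conj (hT : IsScaledComplexification c U l T) (hc : Function.Involutive c)
    (hU : ∀ x, c x = x → c (U x) = U x) (hl : ‖l‖ = 1) (x : M) :
    c (T x) = conj l ^ 2 • T (c x) := by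
  obtain ⟨a, b, ha, hb, rfl⟩ := exists_eq_add_I_smul hc x
  have hconj : c (a + Complex.I • b) = a + Complex.I • (-b) := by
    rw [c.map_add, map_smulₛₗ, ha, hb, Complex.conj_I, smul_neg, neg_smul]
  have hl' : conj l ^ 2 * l = conj l := by
    rw [sq, mul_assoc, Complex.conj_mul', hl]
    simp
  rw [hconj, hT a b ha hb, hT a (-b) ha (by rw [c.map_neg, hb]), map_smulₛₗ, c.map_add,
    map_smulₛₗ, hU a ha, hU b hb, Complex.conj_I, U.map_neg, smul_smul, hl', smul_neg, neg_smul]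

end IsScaledComplexification

end Module

section InnerProductSpace

variable {M : Type*} [NormedAddCommGroup M] [InnerProductSpace ℂ M]

theorem re_inner_eq_of_norm_eq {𝕜 E F : Type*} [RCLike 𝕜] [NormedAddCommGroup E]
    [InnerProductSpace 𝕜 E] [NormedAddCommGroup F] [InnerProductSpace 𝕜 F] {x y : E} {x' y' : F}
    (hx : ‖x'‖ = ‖x‖) (hy : ‖y'‖ = ‖y‖) (hxy : ‖x' + y'‖ = ‖x + y‖) :
    RCLike.re (inner 𝕜 x' y') = RCLike.re (inner 𝕜 x y) := by
  rw [re_inner_eq_norm_add_mul_self_sub_norm_mul_self_sub_norm_mul_self_div_two,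
    re_inner_eq_norm_add_mul_self_sub_norm_mul_self_sub_norm_mul_self_div_two, hx, hy, hxy]

theorem im_inner_eq_zero {c : M →ₗ⋆[ℂ] M}
    (hc : ∀ x y, inner ℂ (c x) (c y) = conj (inner ℂ x y)) {a b : M} (ha : c a = a)
    (hb : c b = b) : (inner ℂ a b).im = 0 := by
  have h := congrArg Complex.im (hc a b)
  rw [ha, hb, Complex.conj_im] at h
  linarith

theorem inner_map_map_of_conj_eq {c : M →ₗ⋆[ℂ] M}
    (hc : ∀ x y, inner ℂ (c x) (c y) = conj (inner ℂ x y)) {U : M →ₗ[ℝ] M}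
    (hUreal : ∀ x, c x = x → c (U x) = U x) (hUiso : ∀ x, c x = x → ‖U x‖ = ‖x‖) {a b : M}
    (ha : c a = a) (hb : c b = b) : inner ℂ (U a) (U b) = inner ℂ a b :=
  Complex.ext
    (re_inner_eq_of_norm_eq (𝕜 := ℂ) (hUiso a ha) (hUiso b hb)
      (by rw [← U.map_add, hUiso _ (by rw [map_add, ha, hb])]))
    (by rw [im_inner_eq_zero hc (hUreal a ha) (hUreal b hb), im_inner_eq_zero hc ha hb])

theorem IsScaledComplexification.inner_map_map {c : M →ₗ⋆[ℂ] M} {U : M →ₗ[ℝ] M} {l : ℂ}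
    {T : M → M} (hT : IsScaledComplexification c U l T) (hc : Function.Involutive c)
    (hcinner : ∀ x y, inner ℂ (c x) (c y) = conj (inner ℂ x y))
    (hUreal : ∀ x, c x = x → c (U x) = U x) (hUiso : ∀ x, c x = x → ‖U x‖ = ‖x‖) (hl : ‖l‖ = 1)
    (x y : M) : inner ℂ (T x) (T y) = inner ℂ x y := by
  obtain ⟨a, b, ha, hb, rfl⟩ := exists_eq_add_I_smul hc x
  obtain ⟨a', b', ha', hb', rfl⟩ := exists_eq_add_I_smul hc y
  have hU {u v : M} (hu : c u = u) (hv : c v = v) :=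
    inner_map_map_of_conj_eq hcinner hUreal hUiso hu hv
  rw [hT a b ha hb, hT a' b' ha' hb', inner_smul_left, inner_smul_right, ← mul_assoc,
    Complex.conj_mul', hl]
  simp only [inner_add_left, inner_add_right, inner_smul_left, inner_smul_right,
    hU ha ha', hU ha hb', hU hb ha', hU hb hb']
  simp

theorem map_spinTriple (c : M → M) (T : M →ₗᵢ[ℂ] M) {μ : ℂ} (hμ : ‖μ‖ = 1)
    (hcT : ∀ x, c (T x) = μ • T (c x)) (x y z : M) :
    T (spinTriple c x y z) = spinTriple c (T x) (T y) (T z) := by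
  simp only [spinTriple, map_sub, map_add, map_smul, T.inner_map_map, hcT, inner_smul_left,
    smul_smul]
  rw [mul_comm _ μ, ← mul_assoc, Complex.mul_conj', hμ]
  simp

end InnerProductSpace

end SpinFactor

open SpinFactor in
/-- A unimodular multiple of a surjective real-linear isometry of the real part of a spin
factor extends to a complex-linear triple automorphism. -/
theorem stmt_16 {M : Type*} [NormedAddCommGroup M] [InnerProductSpace ℂ M] (c : M → M)
    (hadd : ∀ x y, c (x + y) = c x + c y)
    (hsmul : ∀ (t : ℂ) (x : M), c (t • x) = (starRingEnd ℂ t) • c x)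
    (hinv : ∀ x, c (c x) = x)
    (hinner : ∀ x y, (inner ℂ (c x) (c y) : ℂ) = starRingEnd ℂ (inner ℂ x y))
    (U : M → M) (l : ℂ) (hl : ‖l‖ = 1)
    (hUadd : ∀ x y, U (x + y) = U x + U y)
    (hUsmul : ∀ (r : ℝ) (x : M), U (r • x) = r • U x)
    (hUreal : ∀ x, c x = x → c (U x) = U x)
    (hUiso : ∀ x, c x = x → ‖U x‖ = ‖x‖)
    (hUsurj : ∀ y, c y = y → ∃ x, c x = x ∧ U x = y)
    (T : M → M)
    (hT : ∀ a b : M, c a = a → c b = b → T (a + Complex.I • b) = l • (U a + Complex.I • U b)) :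
    (∀ x y, T (x + y) = T x + T y) ∧
    (∀ (t : ℂ) (x : M), T (t • x) = t • T x) ∧
    Function.Bijective T ∧
    (∀ x y z, T (spinTriple c x y z) = spinTriple c (T x) (T y) (T z)) := by
  let C : M →ₗ⋆[ℂ] M := ⟨⟨c, hadd⟩, hsmul⟩
  let V : M →ₗ[ℝ] M := ⟨⟨U, hUadd⟩, hUsmul⟩
  have hC : Function.Involutive C := hinv
  have hT : IsScaledComplexification C V l T := hT
  let T' : M →ₗᵢ[ℂ] M :=
    (hT.toLinearMap hC).isometryOfInner (hT.inner_map_map hC hinner hUreal hUiso hl)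
  have hl0 : l ≠ 0 := norm_ne_zero_iff.mp (hl ▸ one_ne_zero)
  refine ⟨hT.map_add hC, hT.map_smul hC, ⟨T'.injective, hT.surjective hC hl0 hUsurj⟩, ?_⟩
  have hnorm : ‖conj l ^ 2‖ = 1 := by rw [norm_pow, Complex.norm_conj, hl, one_pow]
  exact map_spinTriple c T' hnorm (hT.map_conj hC hUreal hl)
end
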